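/- Let m ∈ ℕ, r ∈ ℝ^m, 0 < θ_min, R ≥ 0, let K ⊆ ℝ^m be a nonempty set contained in the closed ball of radius R centered at r, and let d_true, d_ave ∈ ℝ^m have all entries ≥ θ_min with ‖d_true − d_ave‖ ≤ ε_c. Let s* ∈ K solve the variational inequality VI(F_{d_true,r}, K) and let s' ∈ K solve VI(F_{d_ave,r}, K). Further let H₀ be a metric space, S₀ : ℝ^m → (nonempty bounded subsets of H₀) a set-valued feasible-set map satisfying hausdorffDist(S₀(p), S₀(p')) ≤ L_S ‖p − p'‖ for all p, p', and let J₀ : H₀ → ℝ be γ-Lipschitz. If s₀* ∈ S₀(s') attains f(s₀*) = inf{ J₀(s) : s ∈ S₀(s') }, then for every s₀ ∈ S₀(s*): J₀(s₀*) ≤ J₀(s₀) + γ L_S (R/θ_min) ε_c. That is, the human-driven vehicle's subjectively optimal strategy is an L ε_c-approximate best response to the CAVs' true equilibrium strategies, with L = γ L_S R/θ_min. -/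

import Mathlib

open scoped RealInnerProductSpace

/-- The diagonal-affine operator `F_{d,r}(x)_i = d_i (x_i - r_i)`. -/
noncomputable def Fdr {m : ℕ} (d r : EuclideanSpace ℝ (Fin m)) :
    EuclideanSpace ℝ (Fin m) → EuclideanSpace ℝ (Fin m) :=
  fun x => WithLp.toLp 2 (fun i => d i * (x i - r i))

/-- `x` is a solution of the variational inequality `VI(F, K)`:
`x ∈ K` and `⟪F x, s − x⟫ ≥ 0` for all `s ∈ K`. -/
def VISol {H : Type*} [NormedAddCommGroup H] [InnerProductSpace ℝ H]
    (F : H → H) (K : Set H) (x : H) : Prop :=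
  x ∈ K ∧ ∀ s ∈ K, 0 ≤ ⟪F x, s - x⟫

/-!
The operators `F_{d,r}` with weights `d ≥ θmin` are `θmin`-strongly monotone, so testing the
two variational inequalities against each other gives
`θmin ‖s* - s'‖² ≤ ⟪F_{dave,r} s' - F_{dtrue,r} s', s* - s'⟫`. That difference is the entrywise
product of `dave - dtrue` with `s' - r`, of norm at most `εc R`; hence
`‖s* - s'‖ ≤ R εc / θmin`. The feasible sets `S₀ s*` and `S₀ s'` are then within
`LS R εc / θmin` in Hausdorff distance, and a `γ`-Lipschitz cost minimised over one of two
sets exceeds its value at any point of the other by at most `γ` times their Hausdorff distance.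
-/

open Metric

section VariationalInequality

variable {H : Type*} [NormedAddCommGroup H] [InnerProductSpace ℝ H]

theorem VISol.mul_norm_sub_le {F G : H → H} {K : Set H} {x y : H} {θ : ℝ}
    (hF : ∀ u v, θ * ‖u - v‖ ^ 2 ≤ ⟪F u - F v, u - v⟫)
    (hx : VISol F K x) (hy : VISol G K y) : θ * ‖x - y‖ ≤ ‖G y - F y‖ := by
  have hFx : ⟪F x, x - y⟫ ≤ 0 := by
    have := hx.2 y hy.1
    rw [← neg_sub, inner_neg_right] at this
    linarith
  have hGy : 0 ≤ ⟪G y, x - y⟫ := hy.2 x hx.1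
  have key : θ * ‖x - y‖ ^ 2 ≤ ‖G y - F y‖ * ‖x - y‖ := calc
    θ * ‖x - y‖ ^ 2 ≤ ⟪F x - F y, x - y⟫ := hF x y
    _ = ⟪F x, x - y⟫ - ⟪G y, x - y⟫ + ⟪G y - F y, x - y⟫ := by
      simp only [inner_sub_left]; ring
    _ ≤ ⟪G y - F y, x - y⟫ := by linarith
    _ ≤ ‖G y - F y‖ * ‖x - y‖ := real_inner_le_norm _ _
  rcases (norm_nonneg (x - y)).eq_or_lt with h | h
  · rw [← h, mul_zero]
    exact norm_nonneg _
  · exact le_of_mul_le_mul_right (by linarith) h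

end VariationalInequality

section DiagonalAffine

variable {m : ℕ} (d d' r : EuclideanSpace ℝ (Fin m))

theorem Fdr_sub_Fdr (x : EuclideanSpace ℝ (Fin m)) :
    Fdr d r x - Fdr d' r x = Fdr (d - d') r x := by
  ext i
  simp only [Fdr, PiLp.sub_apply]
  ring

theorem norm_Fdr_le (x : EuclideanSpace ℝ (Fin m)) : ‖Fdr d r x‖ ≤ ‖d‖ * ‖x - r‖ := by
  have hsq : ‖Fdr d r x‖ ^ 2 ≤ (‖d‖ * ‖x - r‖) ^ 2 := calc
    ‖Fdr d r x‖ ^ 2 = ∑ i, d i ^ 2 * (x i - r i) ^ 2 := by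
      simp only [EuclideanSpace.real_norm_sq_eq, Fdr, mul_pow]
    _ ≤ ∑ i, d i ^ 2 * ‖x - r‖ ^ 2 := by
      refine Finset.sum_le_sum fun i _ => mul_le_mul_of_nonneg_left ?_ (sq_nonneg _)
      rw [← sq_abs]
      gcongr
      simpa using PiLp.norm_apply_le (x - r) i
    _ = (‖d‖ * ‖x - r‖) ^ 2 := by
      rw [← Finset.sum_mul, ← EuclideanSpace.real_norm_sq_eq, mul_pow]
  exact (sq_le_sq₀ (norm_nonneg _) (by positivity)).mp hsq

variable {d r} in
theorem mul_norm_sq_le_inner_Fdr_sub_Fdr {θ : ℝ} (hd : ∀ i, θ ≤ d i)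
    (x y : EuclideanSpace ℝ (Fin m)) :
    θ * ‖x - y‖ ^ 2 ≤ ⟪Fdr d r x - Fdr d r y, x - y⟫ := calc
  θ * ‖x - y‖ ^ 2 = ∑ i, θ * (x i - y i) ^ 2 := by
    rw [EuclideanSpace.real_norm_sq_eq, Finset.mul_sum]
    rfl
  _ ≤ ∑ i, d i * (x i - y i) ^ 2 := by
    gcongr with i
    exact hd i
  _ = ⟪Fdr d r x - Fdr d r y, x - y⟫ := by
    simp only [PiLp.inner_apply, Fdr, PiLp.sub_apply, RCLike.inner_apply, conj_trivial]
    exact Finset.sum_congr rfl fun i _ => by ring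

variable {d d' r} in
theorem VISol.norm_sub_le_of_Fdr {K : Set (EuclideanSpace ℝ (Fin m))}
    {x y : EuclideanSpace ℝ (Fin m)} {θ R ε : ℝ} (hθ : 0 < θ) (hK : K ⊆ closedBall r R) (hd : ∀ i, θ ≤ d i)
    (hdd' : ‖d - d'‖ ≤ ε) (hx : VISol (Fdr d r) K x) (hy : VISol (Fdr d' r) K y) :
    ‖x - y‖ ≤ R / θ * ε := by
  have hstab := hx.mul_norm_sub_le (mul_norm_sq_le_inner_Fdr_sub_Fdr hd) hy
  have hpert : ‖Fdr d' r y - Fdr d r y‖ ≤ ε * R := by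
    rw [Fdr_sub_Fdr]
    refine (norm_Fdr_le _ _ _).trans (mul_le_mul ?_ (mem_closedBall_iff_norm.mp (hK hy.1))
      (norm_nonneg _) ((norm_nonneg _).trans hdd'))
    rwa [norm_sub_rev]
  rw [div_mul_eq_mul_div, le_div_iff₀ hθ]
  linarith

end DiagonalAffine

section LipschitzMinimizer

variable {α : Type*} [PseudoMetricSpace α] {f : α → ℝ} {K : NNReal} {s t : Set α} {x a : α}

theorem LipschitzWith.isMinOn_of_eq_csInf (hf : LipschitzWith K f) (ht : Bornology.IsBounded t)
    (hx : f x = sInf (f '' t)) : IsMinOn f t x :=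
  isMinOn_iff.mpr fun _ hb => hx ▸ csInf_le (hf.isBounded_image ht).bddBelow ⟨_, hb, rfl⟩

theorem LipschitzWith.le_add_mul_infDist_of_isMinOn (hf : LipschitzWith K f)
    (hmin : IsMinOn f t x) (ht : t.Nonempty) : f x ≤ f a + K * infDist a t := by
  have : Nonempty t := ht.to_subtype
  have hle : f x - f a ≤ ⨅ b : t, K * dist a b := le_ciInf fun b => by
    have hfb := isMinOn_iff.mp hmin b b.2
    have hlip : f b - f a ≤ K * dist (b : α) a :=
      (le_abs_self _).trans ((Real.dist_eq _ _).ge.trans (hf.dist_le_mul b a))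
    rw [dist_comm] at hlip
    linarith
  rw [← Real.mul_iInf_of_nonneg K.coe_nonneg, ← infDist_eq_iInf] at hle
  linarith

theorem LipschitzWith.le_add_mul_hausdorffDist_of_isMinOn (hf : LipschitzWith K f)
    (hmin : IsMinOn f t x) (ha : a ∈ s) (ht : t.Nonempty) (hs_bdd : Bornology.IsBounded s)
    (ht_bdd : Bornology.IsBounded t) : f x ≤ f a + K * hausdorffDist s t := by
  have hfin := hausdorffEDist_ne_top_of_nonempty_of_bounded ⟨a, ha⟩ ht hs_bdd ht_bdd
  calc f x ≤ f a + K * infDist a t := hf.le_add_mul_infDist_of_isMinOn hmin ht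
    _ ≤ f a + K * hausdorffDist s t := by
      gcongr
      exact infDist_le_hausdorffDist_of_mem ha hfin

end LipschitzMinimizer

theorem hyperNash_perceptual_threshold_general {m : ℕ} (r : EuclideanSpace ℝ (Fin m))
    (θmin R εc : ℝ) (hθ : 0 < θmin)
    (K : Set (EuclideanSpace ℝ (Fin m)))
    (hK : K ⊆ Metric.closedBall r R)
    (dtrue dave : EuclideanSpace ℝ (Fin m))
    (hdtrue : ∀ i, θmin ≤ dtrue i)
    (hεc : ‖dtrue - dave‖ ≤ εc)
    (sstar s' : EuclideanSpace ℝ (Fin m))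
    (hsstar : VISol (Fdr dtrue r) K sstar) (hs' : VISol (Fdr dave r) K s')
    {H₀ : Type*} [MetricSpace H₀]
    (S₀ : EuclideanSpace ℝ (Fin m) → Set H₀)
    (hS₀ne : ∀ p, (S₀ p).Nonempty) (hS₀b : ∀ p, Bornology.IsBounded (S₀ p))
    (LS : ℝ) (hLS : 0 ≤ LS)
    (hS₀lip : ∀ p p', Metric.hausdorffDist (S₀ p) (S₀ p') ≤ LS * ‖p - p'‖)
    (J₀ : H₀ → ℝ) (γ : ℝ) (hγ : 0 ≤ γ)
    (hJ₀lip : ∀ x y : H₀, |J₀ x - J₀ y| ≤ γ * dist x y)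
    (s₀star : H₀)
    (hs₀min : J₀ s₀star = sInf (J₀ '' S₀ s')) :
    ∀ s₀ ∈ S₀ sstar, J₀ s₀star ≤ J₀ s₀ + γ * LS * (R / θmin) * εc := by
  intro s₀ hs₀
  have hJ : LipschitzWith γ.toNNReal J₀ := LipschitzWith.of_dist_le_mul fun x y => by
    rw [Real.coe_toNNReal γ hγ, Real.dist_eq]
    exact hJ₀lip x y
  have hmin := hJ.isMinOn_of_eq_csInf (hS₀b s') hs₀min
  have hdist : ‖sstar - s'‖ ≤ R / θmin * εc := hsstar.norm_sub_le_of_Fdr hθ hK hdtrue hεc hs'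
  calc J₀ s₀star ≤ J₀ s₀ + γ * hausdorffDist (S₀ sstar) (S₀ s') := by
        simpa only [Real.coe_toNNReal γ hγ] using
          hJ.le_add_mul_hausdorffDist_of_isMinOn hmin hs₀ (hS₀ne s') (hS₀b _) (hS₀b _)
    _ ≤ J₀ s₀ + γ * (LS * (R / θmin * εc)) := by
      gcongr
      exact (hS₀lip _ _).trans (by gcongr)
    _ = J₀ s₀ + γ * LS * (R / θmin) * εc := by ring

/-- Quantitative core of the hyper Nash equilibrium theorem: under the cognitive
threshold `‖d_true − d_ave‖ ≤ ε_c`, the human-driven vehicle's subjectively optimal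
strategy `s₀*` (a minimizer of its `γ`-Lipschitz cost `J₀` over the feasible set
`S₀(s')` induced by the equilibrium `s'` of the averaged-weights game) is an
`L ε_c`-approximate best response on the feasible set `S₀(s*)` induced by the
equilibrium `s*` of the true-weights game, with `L = γ L_S R / θmin`. -/
theorem hyperNash_perceptual_threshold {m : ℕ} (r : EuclideanSpace ℝ (Fin m))
    (θmin R εc : ℝ) (hθ : 0 < θmin) (hR : 0 ≤ R)
    (K : Set (EuclideanSpace ℝ (Fin m))) (hKne : K.Nonempty)
    (hK : K ⊆ Metric.closedBall r R)
    (dtrue dave : EuclideanSpace ℝ (Fin m))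
    (hdtrue : ∀ i, θmin ≤ dtrue i) (hdave : ∀ i, θmin ≤ dave i)
    (hεc : ‖dtrue - dave‖ ≤ εc)
    (sstar s' : EuclideanSpace ℝ (Fin m))
    (hsstar : VISol (Fdr dtrue r) K sstar) (hs' : VISol (Fdr dave r) K s')
    {H₀ : Type*} [MetricSpace H₀]
    (S₀ : EuclideanSpace ℝ (Fin m) → Set H₀)
    (hS₀ne : ∀ p, (S₀ p).Nonempty) (hS₀b : ∀ p, Bornology.IsBounded (S₀ p))
    (LS : ℝ) (hLS : 0 ≤ LS)
    (hS₀lip : ∀ p p', Metric.hausdorffDist (S₀ p) (S₀ p') ≤ LS * ‖p - p'‖)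
    (J₀ : H₀ → ℝ) (γ : ℝ) (hγ : 0 ≤ γ)
    (hJ₀lip : ∀ x y : H₀, |J₀ x - J₀ y| ≤ γ * dist x y)
    (s₀star : H₀) (hs₀mem : s₀star ∈ S₀ s')
    (hs₀min : J₀ s₀star = sInf (J₀ '' S₀ s')) :
    ∀ s₀ ∈ S₀ sstar, J₀ s₀star ≤ J₀ s₀ + γ * LS * (R / θmin) * εc :=
  hyperNash_perceptual_threshold_general r θmin R εc hθ K hK dtrue dave hdtrue hεc sstar s' hsstar
    hs' S₀ hS₀ne hS₀b LS hLS hS₀lip J₀ γ hγ hJ₀lip s₀star hs₀min
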